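/- Let f : ℂ × ℂ^{n−1} → ℂ be holomorphic near 0 of the form f(x, y) = Σ_{j ≥ m} a_j(y) xʲ with a_m(0) ≠ 0, where m ≥ 1. Then there exists a holomorphic function φ(x, y) = b_1(y) x + Σ_{j ≥ 2} b_j(y) xʲ, defined near 0, with b_1(y) ≠ 0 for y near 0, such that φ(x, y)^m = f(x, y) identically near 0. -/

import Mathlib

open Filter Topology

theorem AnalyticAt.exists_pow_eq {E : Type*} [NormedAddCommGroup E] [NormedSpace ℂ E]
    {g : E → ℂ} {x₀ : E} (hg : AnalyticAt ℂ g x₀) (hg₀ : g x₀ ≠ 0) {m : ℕ} (hm : m ≠ 0) :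
    ∃ b : E → ℂ, AnalyticAt ℂ b x₀ ∧ (∀ x, b x ≠ 0) ∧ ∀ᶠ x in 𝓝 x₀, b x ^ m = g x := by
  set c : ℂ := g x₀ ^ (m⁻¹ : ℂ)
  have hcm : c ^ m = g x₀ := Complex.cpow_nat_inv_pow _ hm
  have hc : c ≠ 0 := fun h => hg₀ (by rw [← hcm, h, zero_pow hm])
  have hm' : (m : ℂ) ≠ 0 := Nat.cast_ne_zero.mpr hm
  -- `g / g x₀` is close to `1`, hence stays in the slit plane, where `log` is analytic.
  refine ⟨fun x => c * Complex.exp ((m : ℂ)⁻¹ * Complex.log (g x / g x₀)), ?_,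
    fun x => mul_ne_zero hc (Complex.exp_ne_zero _), ?_⟩
  · refine analyticAt_const.mul (analyticAt_const.mul ((hg.div analyticAt_const hg₀).clog ?_)).cexp
    simp [div_self hg₀, Complex.slitPlane]
  · filter_upwards [hg.continuousAt.eventually_ne hg₀] with x hx
    rw [mul_pow, hcm, ← Complex.exp_nat_mul, ← mul_assoc, mul_inv_cancel₀ hm', one_mul,
      Complex.exp_log (div_ne_zero hx hg₀), mul_div_cancel₀ _ hg₀]

theorem stmt2_general (n m : ℕ) (hm : 1 ≤ m)
    (f g : ℂ × (Fin (n - 1) → ℂ) → ℂ)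
    (hg : AnalyticAt ℂ g 0) (hg0 : g 0 ≠ 0)
    (hf : ∀ᶠ p in nhds (0 : ℂ × (Fin (n - 1) → ℂ)), f p = p.1 ^ m * g p) :
    ∃ b : ℂ × (Fin (n - 1) → ℂ) → ℂ,
      AnalyticAt ℂ b 0 ∧ b 0 ≠ 0 ∧
      (∀ᶠ y in nhds (0 : Fin (n - 1) → ℂ), b (0, y) ≠ 0) ∧
      (∀ᶠ p in nhds (0 : ℂ × (Fin (n - 1) → ℂ)), (p.1 * b p) ^ m = f p) := by
  obtain ⟨b, hb, hb₀, hbg⟩ := hg.exists_pow_eq hg0 (Nat.one_le_iff_ne_zero.mp hm)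
  refine ⟨b, hb, hb₀ 0, .of_forall fun y => hb₀ (0, y), ?_⟩
  filter_upwards [hf, hbg] with p hfp hbp
  rw [mul_pow, hbp, hfp]

theorem stmt2 (n m : ℕ) (hn : 1 ≤ n) (hm : 1 ≤ m)
    (f g : ℂ × (Fin (n - 1) → ℂ) → ℂ)
    (hg : AnalyticAt ℂ g 0) (hg0 : g 0 ≠ 0)
    (hf : ∀ᶠ p in nhds (0 : ℂ × (Fin (n - 1) → ℂ)), f p = p.1 ^ m * g p) :
    ∃ b : ℂ × (Fin (n - 1) → ℂ) → ℂ,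
      AnalyticAt ℂ b 0 ∧ b 0 ≠ 0 ∧
      (∀ᶠ y in nhds (0 : Fin (n - 1) → ℂ), b (0, y) ≠ 0) ∧
      (∀ᶠ p in nhds (0 : ℂ × (Fin (n - 1) → ℂ)), (p.1 * b p) ^ m = f p) :=
  stmt2_general n m hm f g hg hg0 hf
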